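/- arXiv:1004.1317 — 7 statements merged into one kernel-verified Lean document; each statement's English description precedes it below -/
import Mathlib

section
/- Let μ ≥ 1 and let p : Fin μ → ℝ satisfy 0 ≤ p i for all i and ∑ i, p i = 1. Let T be the real matrix indexed by (Fin μ) × (Fin μ) with entries T ((a,b),(c,d)) = Real.sqrt (p a * p b) if c = b and d = a, and 0 otherwise. Then T is Hermitian (symmetric), and the sum over all indices of the absolute values of its eigenvalues (counted with multiplicity, e.g. via Matrix.IsHermitian.eigenvalues) equals (∑ i, Real.sqrt (p i))². -/
/-!
The partial transpose `T` is the swap `(a, b) ↦ (b, a)` weighted by `√(p a p b)`, so `T * T` is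
diagonal with entries `p a * p b`. Since `T` is Hermitian, the squares of its eigenvalues are the
eigenvalues of `T * T` (compare characteristic polynomials after diagonalising), hence
`∑ |λ| = ∑ √(p a p b) = (∑ √(p a))²`.
-/

open Polynomial

theorem Polynomial.roots_prod_X_sub_C_eq_map {R ι : Type*} [CommRing R] [IsDomain R]
    (s : Finset ι) (f : ι → R) : (∏ i ∈ s, (X - C (f i))).roots = s.val.map f := by
  simpa [Multiset.map_map] using roots_multiset_prod_X_sub_C (s.val.map f)

namespace Matrix

section WeightedInvolution

variable {n R : Type*} [DecidableEq n]

def weightedInvolution [Zero R] (σ : n → n) (w : n → R) : Matrix n n R :=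
  of fun x y => if y = σ x then w x else 0

theorem weightedInvolution_mul_self [Fintype n] [NonUnitalNonAssocSemiring R] {σ : n → n}
    (hσ : Function.Involutive σ) (w : n → R) :
    weightedInvolution σ w * weightedInvolution σ w = diagonal fun x => w x * w (σ x) := by
  ext x y
  simp only [weightedInvolution, mul_apply, of_apply, ite_mul, zero_mul, Finset.sum_ite_eq',
    Finset.mem_univ, if_true, hσ x]
  rw [diagonal_apply, mul_ite, mul_zero]
  exact if_congr eq_comm rfl rfl

theorem isHermitian_weightedInvolution [NonUnitalNonAssocSemiring R] [StarRing R] [TrivialStar R]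
    {σ : n → n} (hσ : Function.Involutive σ) {w : n → R} (hw : ∀ x, w (σ x) = w x) :
    (weightedInvolution σ w).IsHermitian := by
  ext x y
  simp only [weightedInvolution, conjTranspose_apply, of_apply, star_trivial]
  have hyx : x = σ y ↔ y = σ x := ⟨fun h => h ▸ (hσ y).symm, fun h => h ▸ (hσ x).symm⟩
  by_cases h : y = σ x
  · rw [if_pos (hyx.mpr h), if_pos h, h, hw]
  · rw [if_neg (mt hyx.mp h), if_neg h]

end WeightedInvolution

namespace IsHermitian

variable {𝕜 n : Type*} [RCLike 𝕜] [Fintype n] [DecidableEq n] {A : Matrix n n 𝕜}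

theorem charpoly_mul_self (hA : A.IsHermitian) :
    (A * A).charpoly = ∏ i, (X - C ((hA.eigenvalues i ^ 2 : ℝ) : 𝕜)) := by
  conv_lhs => rw [hA.spectral_theorem, ← map_mul, diagonal_mul_diagonal,
    Unitary.conjStarAlgAut_apply, charpoly_mul_comm, ← mul_assoc]
  simp [charpoly_diagonal, sq]

theorem map_sq_eigenvalues_of_mul_self_eq_diagonal (hA : A.IsHermitian) {d : n → ℝ}
    (hd : A * A = diagonal fun i => (d i : 𝕜)) :
    Finset.univ.val.map (fun i => hA.eigenvalues i ^ 2) = Finset.univ.val.map d := by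
  apply Multiset.map_injective (f := ((↑) : ℝ → 𝕜)) RCLike.ofReal_injective
  have hroots := congrArg roots (hA.charpoly_mul_self.symm.trans (hd ▸ charpoly_diagonal _))
  rw [roots_prod_X_sub_C_eq_map, roots_prod_X_sub_C_eq_map] at hroots
  rw [Multiset.map_map, Multiset.map_map]
  exact hroots

theorem sum_abs_eigenvalues_of_mul_self_eq_diagonal (hA : A.IsHermitian) {d : n → ℝ}
    (hd : A * A = diagonal fun i => (d i : 𝕜)) :
    ∑ i, |hA.eigenvalues i| = ∑ i, √(d i) :=
  calc ∑ i, |hA.eigenvalues i| = ∑ i, √(hA.eigenvalues i ^ 2) := by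
        simp only [Real.sqrt_sq_eq_abs]
    _ = ((Finset.univ.val.map fun i => hA.eigenvalues i ^ 2).map Real.sqrt).sum := by
        rw [Multiset.map_map]; rfl
    _ = ∑ i, √(d i) := by
        rw [hA.map_sq_eigenvalues_of_mul_self_eq_diagonal hd, Multiset.map_map]; rfl

end IsHermitian

end Matrix

open Matrix in
theorem negativity_pure_state_trace_norm_general
    (μ : ℕ) (p : Fin μ → ℝ)
    (hp : ∀ i, 0 ≤ p i)
    (T : Matrix (Fin μ × Fin μ) (Fin μ × Fin μ) ℝ)
    (hT : ∀ a b c d : Fin μ,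
      T (a, b) (c, d) = if c = b ∧ d = a then Real.sqrt (p a * p b) else 0) :
    ∃ h : T.IsHermitian,
      ∑ i, |h.eigenvalues i| = (∑ i, Real.sqrt (p i)) ^ 2 := by
  obtain rfl : T = weightedInvolution Prod.swap fun x => √(p x.1 * p x.2) := by
    ext ⟨a, b⟩ ⟨c, d⟩
    simp [hT, weightedInvolution, Prod.ext_iff]
  refine ⟨isHermitian_weightedInvolution Prod.swap_swap
    fun _ => congrArg Real.sqrt (mul_comm ..), ?_⟩
  have hsq : weightedInvolution Prod.swap (fun x : Fin μ × Fin μ => √(p x.1 * p x.2)) *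
      weightedInvolution Prod.swap (fun x => √(p x.1 * p x.2)) =
      diagonal fun x => p x.1 * p x.2 := by
    rw [weightedInvolution_mul_self Prod.swap_swap]
    congr! 2 with x
    rw [Prod.fst_swap, Prod.snd_swap, mul_comm (p x.2),
      Real.mul_self_sqrt (mul_nonneg (hp _) (hp _))]
  rw [IsHermitian.sum_abs_eigenvalues_of_mul_self_eq_diagonal _ hsq, sq, Finset.sum_mul_sum,
    Fintype.sum_prod_type]
  exact Finset.sum_congr rfl fun a _ => Finset.sum_congr rfl fun b _ => Real.sqrt_mul (hp a) (p b)

theorem negativity_pure_state_trace_norm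
    (μ : ℕ) (hμ : 1 ≤ μ) (p : Fin μ → ℝ)
    (hp : ∀ i, 0 ≤ p i) (hsum : ∑ i, p i = 1)
    (T : Matrix (Fin μ × Fin μ) (Fin μ × Fin μ) ℝ)
    (hT : ∀ a b c d : Fin μ,
      T (a, b) (c, d) = if c = b ∧ d = a then Real.sqrt (p a * p b) else 0) :
    ∃ h : T.IsHermitian,
      ∑ i, |h.eigenvalues i| = (∑ i, Real.sqrt (p i)) ^ 2 :=
  negativity_pure_state_trace_norm_general μ p hp T hT
end

section
/- Let μ ≥ 1, let s ≥ 0 be real, and let f : (Fin μ → ℝ) → ℝ be continuous and positively homogeneous of degree s, i.e. f (r • q) = r^s * f q for every r > 0 and every q with 0 ≤ q i for all i. Then ∫_{q ∈ (0,∞)^μ} f q · exp (−∑ i, q i) dq = Real.Gamma (s + μ) · ∫_{x ∈ D_μ} f (p x) dx, where both integrals are with respect to Lebesgue measure of the appropriate dimension. -/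
open scoped BigOperators

/-- The simplex domain `D_μ`: points `x : Fin (μ-1) → ℝ` with positive coordinates
summing to less than 1. -/
def Dset (μ : ℕ) : Set (Fin (μ - 1) → ℝ) :=
  {x | (∀ i, 0 < x i) ∧ ∑ i, x i < 1}

/-- Extension of `x : Fin (μ-1) → ℝ` to a point of the probability simplex in `Fin μ → ℝ`,
the last coordinate being `1 - ∑ i, x i`. -/
noncomputable def pExt (μ : ℕ) (x : Fin (μ - 1) → ℝ) : Fin μ → ℝ :=
  fun i => if h : (i : ℕ) < μ - 1 then x ⟨i, h⟩ else 1 - ∑ j, x j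

/-!
Every `q` in the open orthant is `r • p(x)` for a unique `r = ∑ i, q i > 0` and `x ∈ D_μ`. In
the coordinates `(q_last, q_init)` the map `(r, x) ↦ r • p(x)` is `(r, x) ↦ (r (1 - ∑ x), r x)`,
whose derivative is the dilation `(h, k) ↦ (h, r k)` followed by two transvections, so its
Jacobian is `r ^ (μ - 1)`. Homogeneity turns the pulled-back integrand into
`e^{-r} r^(s + μ - 1) f(p(x))`, and the `r`-integral is `Γ(s + μ)`. No integrability is needed:
the change of variables formula and `∫∫ g(r) h(x) = (∫ g)(∫ h)` hold for the Bochner integral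
unconditionally.
-/

open MeasureTheory Set

section SimplexCone

variable {n : ℕ}

lemma pExt_succ (x : Fin n → ℝ) : pExt (n + 1) x = Fin.snoc x (1 - ∑ i, x i) := by
  ext i
  induction i using Fin.lastCases <;> simp [pExt]

lemma sum_pExt_succ (x : Fin n → ℝ) : ∑ i, pExt (n + 1) x i = 1 := by
  simp [pExt_succ, Fin.sum_univ_castSucc]

/-- `Dset (n + 1)`, with its index type `Fin (n + 1 - 1)` reduced to `Fin n`. -/
def openSimplex (n : ℕ) : Set (Fin n → ℝ) := {x | (∀ i, 0 < x i) ∧ ∑ i, x i < 1}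

lemma measurableSet_openSimplex : MeasurableSet (openSimplex n) := by
  unfold openSimplex; measurability

lemma pExt_succ_nonneg {x : Fin n → ℝ} (hx : x ∈ openSimplex n) (i : Fin (n + 1)) :
    0 ≤ pExt (n + 1) x i := by
  induction i using Fin.lastCases with
  | last => simpa [pExt_succ] using hx.2.le
  | cast j => simpa [pExt_succ] using (hx.1 j).le

/-- `(r, x) ↦ r • pExt (n + 1) x`, in the coordinates `(q (Fin.last n), q ∘ Fin.castSucc)`
of `MeasurableEquiv.piFinSuccAbove`. -/
noncomputable def coneMap (n : ℕ) (p : ℝ × (Fin n → ℝ)) : ℝ × (Fin n → ℝ) :=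
  (p.1 * (1 - ∑ i, p.2 i), p.1 • p.2)

noncomputable def coneMapDeriv (r : ℝ) (x : Fin n → ℝ) : Module.End ℝ (ℝ × (Fin n → ℝ)) :=
  LinearMap.transvection (-((∑ i, LinearMap.proj i) ∘ₗ LinearMap.snd ℝ ℝ _)) (1, 0) ∘ₗ
    LinearMap.transvection (LinearMap.fst ℝ ℝ _) (0, x) ∘ₗ
    LinearMap.prodMap LinearMap.id (r • LinearMap.id)

lemma det_coneMapDeriv (r : ℝ) (x : Fin n → ℝ) : LinearMap.det (coneMapDeriv r x) = r ^ n := by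
  simp [coneMapDeriv, LinearMap.det_comp, LinearMap.det_prodMap, LinearMap.det_smul]

lemma hasFDerivAt_coneMap (p : ℝ × (Fin n → ℝ)) :
    HasFDerivAt (coneMap n) (LinearMap.toContinuousLinearMap (coneMapDeriv p.1 p.2)) p := by
  have hsum : HasFDerivAt (fun q : ℝ × (Fin n → ℝ) => ∑ i, q.2 i)
      (∑ i, (ContinuousLinearMap.proj i).comp (ContinuousLinearMap.snd ℝ ℝ _)) p :=
    HasFDerivAt.fun_sum fun i _ =>
      (hasFDerivAt_apply i p.2).comp (g := fun x : Fin n → ℝ => x i) p hasFDerivAt_snd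
  have hsmul := (hasFDerivAt_fst (p := p) (𝕜 := ℝ)).fun_smul (hasFDerivAt_snd (p := p))
  refine ((hasFDerivAt_fst.mul (hsum.const_sub 1)).prodMk hsmul).congr_fderiv ?_
  refine ContinuousLinearMap.ext fun v => ?_
  ext <;> simp [coneMapDeriv, LinearMap.transvection.apply, Finset.sum_add_distrib,
    ← Finset.mul_sum]
  ring

lemma coneMap_fst_add_sum (p : ℝ × (Fin n → ℝ)) :
    (coneMap n p).1 + ∑ i, (coneMap n p).2 i = p.1 := by
  simp only [coneMap, Pi.smul_apply, smul_eq_mul, ← Finset.mul_sum]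
  ring

lemma injOn_coneMap : InjOn (coneMap n) {p | p.1 ≠ 0} := by
  intro p hp q _ hpq
  have hr : p.1 = q.1 := by rw [← coneMap_fst_add_sum p, hpq, coneMap_fst_add_sum]
  have hx : p.1 • p.2 = p.1 • q.2 := by simpa [coneMap, hr] using congrArg Prod.snd hpq
  exact Prod.ext hr (smul_right_injective _ hp hx)

lemma coneMap_image_Ioi_prod_openSimplex :
    coneMap n '' (Ioi 0 ×ˢ openSimplex n) = Ioi 0 ×ˢ {y | ∀ i, 0 < y i} := by
  ext ⟨a, y⟩
  constructor
  · rintro ⟨⟨r, x⟩, ⟨hr, hx, hsum⟩, hrx⟩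
    simp only [coneMap, Prod.mk.injEq] at hrx
    rw [← hrx.1, ← hrx.2]
    exact ⟨mul_pos hr (sub_pos.2 hsum), fun i => mul_pos hr (hx i)⟩
  · rintro ⟨ha : 0 < a, hy : ∀ i, 0 < y i⟩
    set r := a + ∑ i, y i
    have hr : 0 < r := add_pos_of_pos_of_nonneg ha (Finset.sum_nonneg fun i _ => (hy i).le)
    refine ⟨(r, r⁻¹ • y), ⟨hr, fun i => by simp [hr, hy i], ?_⟩, ?_⟩
    · simp only [Pi.smul_apply, smul_eq_mul, ← Finset.mul_sum]
      rw [inv_mul_lt_iff₀ hr, mul_one]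
      exact lt_add_of_pos_left _ ha
    · simp only [coneMap, smul_inv_smul₀ hr.ne', Pi.smul_apply, smul_eq_mul, ← Finset.mul_sum,
        mul_sub, mul_one, mul_inv_cancel_left₀ hr.ne']
      simp [r]

lemma piFinSuccAbove_symm_coneMap (p : ℝ × (Fin n → ℝ)) :
    (MeasurableEquiv.piFinSuccAbove (fun _ => ℝ) (Fin.last n)).symm (coneMap n p) =
      p.1 • pExt (n + 1) p.2 := by
  ext i
  induction i using Fin.lastCases <;> simp [coneMap, pExt_succ]

variable {E : Type*} [NormedAddCommGroup E] [NormedSpace ℝ E]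

theorem setIntegral_Ioi_prod_orthant_eq_setIntegral_coneMap (g : ℝ × (Fin n → ℝ) → E) :
    ∫ z in Ioi 0 ×ˢ {y | ∀ i, 0 < y i}, g z =
      ∫ p in Ioi 0 ×ˢ openSimplex n, p.1 ^ n • g (coneMap n p) := by
  have hmeas : MeasurableSet (Ioi (0 : ℝ) ×ˢ openSimplex n) :=
    measurableSet_Ioi.prod measurableSet_openSimplex
  have : (volume : Measure (ℝ × (Fin n → ℝ))).IsAddHaarMeasure := by
    rw [Measure.volume_eq_prod]; infer_instance
  rw [← coneMap_image_Ioi_prod_openSimplex,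
    integral_image_eq_integral_abs_det_fderiv_smul volume hmeas
      (fun p _ => (hasFDerivAt_coneMap p).hasFDerivWithinAt)
      (injOn_coneMap.mono fun p hp => (mem_Ioi.1 hp.1).ne')]
  refine setIntegral_congr_fun hmeas fun p hp => ?_
  rw [ContinuousLinearMap.det, LinearMap.coe_toContinuousLinearMap, det_coneMapDeriv,
    abs_of_pos (pow_pos hp.1 n)]

theorem setIntegral_orthant_eq_setIntegral_Ioi_prod_openSimplex (g : (Fin (n + 1) → ℝ) → E) :
    ∫ q in {q : Fin (n + 1) → ℝ | ∀ i, 0 < q i}, g q =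
      ∫ p in Ioi (0 : ℝ) ×ˢ openSimplex n, p.1 ^ n • g (p.1 • pExt (n + 1) p.2) := by
  set e := MeasurableEquiv.piFinSuccAbove (fun _ : Fin (n + 1) => ℝ) (Fin.last n)
  have he : e.symm ⁻¹' {q | ∀ i, 0 < q i} = Ioi 0 ×ˢ {y | ∀ i, 0 < y i} := by
    ext ⟨a, y⟩
    simp [e, Fin.forall_fin_succ', and_comm]
  rw [← ((volume_preserving_piFinSuccAbove _ (Fin.last n)).symm e).setIntegral_preimage_emb
    e.symm.measurableEmbedding, he, setIntegral_Ioi_prod_orthant_eq_setIntegral_coneMap]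
  simp_rw [e, piFinSuccAbove_symm_coneMap]

end SimplexCone

theorem simplex_to_orthant_change_of_variables_general
    (μ : ℕ) (hμ : 1 ≤ μ) (s : ℝ) (hs : 0 ≤ s)
    (f : (Fin μ → ℝ) → ℝ)
    (hhom : ∀ r : ℝ, 0 < r → ∀ q : Fin μ → ℝ, (∀ i, 0 ≤ q i) →
      f (r • q) = r ^ s * f q) :
    ∫ q in {q : Fin μ → ℝ | ∀ i, 0 < q i}, f q * Real.exp (-∑ i, q i)
      = Real.Gamma (s + μ) * ∫ x in Dset μ, f (pExt μ x) := by
  obtain ⟨n, rfl⟩ : ∃ n, μ = n + 1 := ⟨μ - 1, by omega⟩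
  have hfactor : ∀ p ∈ Ioi (0 : ℝ) ×ˢ openSimplex n,
      p.1 ^ n • (f (p.1 • pExt (n + 1) p.2) * Real.exp (-∑ i, (p.1 • pExt (n + 1) p.2) i))
        = Real.exp (-p.1) * p.1 ^ (s + n) * f (pExt (n + 1) p.2) := by
    rintro ⟨r, x⟩ ⟨hr : 0 < r, hx⟩
    simp only [Pi.smul_apply, smul_eq_mul, ← Finset.mul_sum, sum_pExt_succ, mul_one,
      hhom r hr _ (pExt_succ_nonneg hx), Real.rpow_add hr, Real.rpow_natCast]
    ring
  have hGamma :
      ∫ r in Ioi (0 : ℝ), Real.exp (-r) * r ^ (s + n) = Real.Gamma (s + (n + 1 : ℕ)) := by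
    rw [Real.Gamma_eq_integral (by positivity), Nat.cast_succ, ← add_assoc, add_sub_cancel_right]
  rw [setIntegral_orthant_eq_setIntegral_Ioi_prod_openSimplex,
    setIntegral_congr_fun (measurableSet_Ioi.prod measurableSet_openSimplex) hfactor,
    Measure.volume_eq_prod, ← Measure.prod_restrict,
    integral_prod_mul (fun r => Real.exp (-r) * r ^ (s + n))
      (fun x : Fin n → ℝ => f (pExt (n + 1) x)), hGamma]
  rfl

theorem simplex_to_orthant_change_of_variables
    (μ : ℕ) (hμ : 1 ≤ μ) (s : ℝ) (hs : 0 ≤ s)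
    (f : (Fin μ → ℝ) → ℝ) (hf : Continuous f)
    (hhom : ∀ r : ℝ, 0 < r → ∀ q : Fin μ → ℝ, (∀ i, 0 ≤ q i) →
      f (r • q) = r ^ s * f q) :
    ∫ q in {q : Fin μ → ℝ | ∀ i, 0 < q i}, f q * Real.exp (-∑ i, q i)
      = Real.Gamma (s + μ) * ∫ x in Dset μ, f (pExt μ x) :=
  simplex_to_orthant_change_of_variables_general μ hμ s hs f hhom
end

section
/- For every μ ≥ 1, ∫_{q ∈ (0,∞)^μ} (∏_{i < j} (q i − q j)²) · exp (−∑ k, q k) dq = μ! · ∏_{k=0}^{μ−1} (k!)², where the integral is with respect to μ-dimensional Lebesgue measure over the positive orthant. -/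
/-!
The integrand is `det (q_i ^ j) * det (exp (-q_i) * q_i ^ j)`, so Andréief's identity
`∫ det (f_j (x_i)) det (g_j (x_i)) dν^⊗n = n! det (∫ f_i g_j dν)` reduces the integral over the
orthant to `μ!` times the determinant of the Hankel matrix of moments
`∫₀^∞ x ^ (i + j) e^(-x) dx = (i + j)!`. Vandermonde's convolution factors that matrix as `B Bᵀ`
with `B` lower triangular, `B_ik = i! (i choose k)`, whence the determinant `(∏ i!)²`.
-/

open MeasureTheory Finset Matrix Equiv

theorem integrableOn_pow_mul_exp_neg_Ioi (n : ℕ) :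
    IntegrableOn (fun x : ℝ => x ^ n * Real.exp (-x)) (Set.Ioi 0) := by
  refine (Real.GammaIntegral_convergent (s := n + 1) (by positivity)).congr_fun
    (fun x _ => ?_) measurableSet_Ioi
  simp [mul_comm]

theorem integral_pow_mul_exp_neg_Ioi (n : ℕ) :
    ∫ x in Set.Ioi (0 : ℝ), x ^ n * Real.exp (-x) = n.factorial := by
  rw [← Real.Gamma_nat_eq_factorial, Real.Gamma_eq_integral (by positivity)]
  refine setIntegral_congr_fun measurableSet_Ioi (fun x _ => ?_)
  simp [mul_comm]

theorem prod_prod_Ioi_sub_sq_eq_det_vandermonde_sq {R : Type*} [CommRing R] {n : ℕ}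
    (v : Fin n → R) :
    ∏ i, ∏ j ∈ Ioi i, (v i - v j) ^ 2 = (vandermonde v).det ^ 2 := by
  rw [det_vandermonde, ← prod_pow]
  exact prod_congr rfl fun i _ => by rw [← prod_pow]; exact prod_congr rfl fun j _ => by ring

theorem sum_range_choose_mul_choose_of_lt {i j n : ℕ} (hj : j < n) :
    ∑ k ∈ range n, i.choose k * j.choose k = (i + j).choose j := by
  rw [Nat.add_choose_eq,
    Nat.sum_antidiagonal_eq_sum_range_succ (fun a b => i.choose a * j.choose b),
    ← sum_subset (range_subset_range.2 hj) fun k _ hk => by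
      rw [Nat.choose_eq_zero_of_lt (by simpa using hk : j < k), mul_zero]]
  exact sum_congr rfl fun k hk => by rw [Nat.choose_symm (Nat.lt_succ_iff.mp (mem_range.mp hk))]

theorem det_of_factorial_add {R : Type*} [CommRing R] (n : ℕ) :
    (of fun i j : Fin n => (((i : ℕ) + j).factorial : R)).det
      = (∏ i : Fin n, ((i : ℕ).factorial : R)) ^ 2 := by
  let B : Matrix (Fin n) (Fin n) R := of fun i k => ((i : ℕ).factorial * (i : ℕ).choose k : ℕ)
  have factor : (of fun i j : Fin n => (((i : ℕ) + j).factorial : R)) = B * Bᵀ := by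
    ext i j
    simp only [B, mul_apply, transpose_apply, of_apply, ← Nat.cast_mul, ← Nat.cast_sum]
    rw [Fin.sum_univ_eq_sum_range (fun k => (i : ℕ).factorial * (i : ℕ).choose k *
      ((j : ℕ).factorial * (j : ℕ).choose k)), ← Nat.add_choose_mul_factorial_mul_factorial,
      ← sum_range_choose_mul_choose_of_lt j.isLt, sum_mul, sum_mul]
    exact congrArg _ (sum_congr rfl fun k _ => by ring)
  have lower : B.IsLowerTriangular := fun i j hij => by
    simp [B, Nat.choose_eq_zero_of_lt (show (i : ℕ) < j from hij)]
  rw [factor, det_mul, det_transpose, det_of_isLowerTriangular B lower, sq]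
  simp [B]

section Andreief

variable {ι α R : Type*} [Fintype ι] [DecidableEq ι]

theorem sum_perm_sum_perm_sign_mul_prod [CommRing R] (A : Matrix ι ι R) :
    ∑ σ : Perm ι, ∑ τ : Perm ι,
        ((Perm.sign σ : ℤ) : R) * (Perm.sign τ : ℤ) * ∏ i, A (σ i) (τ i)
      = ((Fintype.card ι).factorial : R) * A.det := by
  have inner (σ : Perm ι) :
      ∑ τ : Perm ι, ((Perm.sign σ : ℤ) : R) * (Perm.sign τ : ℤ) * ∏ i, A (σ i) (τ i) = A.det := by
    have h := det_permute σ A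
    rw [← det_transpose, det_apply'] at h
    simp only [transpose_apply, submatrix_apply, id] at h
    simp_rw [mul_assoc, ← mul_sum, h, ← mul_assoc, ← Int.cast_mul, ← Units.val_mul,
      Int.units_mul_self, Units.val_one, Int.cast_one, one_mul]
  simp only [inner, sum_const, card_univ, Fintype.card_perm, nsmul_eq_mul]

theorem det_of_apply_eq_sum [CommRing R] (f : ι → α → R) (x : ι → α) :
    (of fun i j => f j (x i)).det = ∑ σ : Perm ι, (Perm.sign σ : ℤ) * ∏ i, f (σ i) (x i) := by
  rw [← det_transpose, det_apply']
  rfl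

theorem integral_det_mul_det_eq_factorial_mul_det {𝕜 : Type*} [RCLike 𝕜] [MeasurableSpace α]
    (ν : Measure α) [SigmaFinite ν] (f g : ι → α → 𝕜)
    (hfg : ∀ i j, Integrable (fun a => f i a * g j a) ν) :
    ∫ x : ι → α, (of fun i j => f j (x i)).det * (of fun i j => g j (x i)).det
        ∂(Measure.pi fun _ => ν)
      = ((Fintype.card ι).factorial : 𝕜) * (of fun i j => ∫ a, f i a * g j a ∂ν).det := by
  have expand (x : ι → α) :
      (of fun i j => f j (x i)).det * (of fun i j => g j (x i)).det
        = ∑ σ : Perm ι, ∑ τ : Perm ι, ((Perm.sign σ : ℤ) : 𝕜) * (Perm.sign τ : ℤ) *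
            ∏ i, f (σ i) (x i) * g (τ i) (x i) := by
    simp only [det_of_apply_eq_sum, sum_mul_sum, prod_mul_distrib]
    exact sum_congr rfl fun _ _ => sum_congr rfl fun _ _ => by ring
  have integrable (σ τ : Perm ι) :
      Integrable (fun x : ι → α => ∏ i, f (σ i) (x i) * g (τ i) (x i)) (Measure.pi fun _ => ν) :=
    Integrable.fintype_prod (f := fun i a => f (σ i) a * g (τ i) a) fun i => hfg _ _
  simp_rw [expand]
  rw [integral_finsetSum _ fun σ _ =>
    integrable_finsetSum _ fun τ _ => (integrable σ τ).const_mul _]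
  refine (sum_congr rfl fun σ _ => ?_).trans (sum_perm_sum_perm_sign_mul_prod _)
  rw [integral_finsetSum _ fun τ _ => (integrable σ τ).const_mul _]
  refine sum_congr rfl fun τ _ => ?_
  rw [integral_const_mul, integral_fintype_prod_eq_prod (fun i a => f (σ i) a * g (τ i) a)]
  rfl

end Andreief

theorem vandermonde_squared_exp_integral_general (μ : ℕ) :
    ∫ q in {q : Fin μ → ℝ | ∀ i, 0 < q i},
        (∏ i, ∏ j ∈ Finset.Ioi i, (q i - q j) ^ 2) * Real.exp (-∑ k, q k)
      = (μ.factorial : ℝ) * ∏ k ∈ Finset.range μ, ((k.factorial : ℝ)) ^ 2 := by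
  have orthant : {q : Fin μ → ℝ | ∀ i, 0 < q i} = Set.univ.pi fun _ => Set.Ioi 0 := by
    ext; simp
  have integrand (q : Fin μ → ℝ) :
      (∏ i, ∏ j ∈ Ioi i, (q i - q j) ^ 2) * Real.exp (-∑ k, q k)
        = (of fun i j : Fin μ => q i ^ (j : ℕ)).det
          * (of fun i j : Fin μ => Real.exp (-q i) * q i ^ (j : ℕ)).det := by
    have weighted := det_mul_column (fun i => Real.exp (-q i)) (vandermonde q)
    simp only [vandermonde_apply] at weighted
    rw [weighted, prod_prod_Ioi_sub_sq_eq_det_vandermonde_sq, ← Real.exp_sum, sum_neg_distrib]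
    simp only [vandermonde]
    ring
  have moment (i j : ℕ) : (fun a : ℝ => a ^ i * (Real.exp (-a) * a ^ j))
      = fun a => a ^ (i + j) * Real.exp (-a) := by
    ext; ring
  rw [orthant, volume_pi, Measure.restrict_pi_pi, integral_congr_ae (.of_forall integrand),
    integral_det_mul_det_eq_factorial_mul_det _ (fun (i : Fin μ) a => a ^ (i : ℕ))
      (fun (j : Fin μ) a => Real.exp (-a) * a ^ (j : ℕ))
      fun i j => by simpa only [moment] using (integrableOn_pow_mul_exp_neg_Ioi _).integrable]
  simp only [moment, integral_pow_mul_exp_neg_Ioi, det_of_factorial_add, Fintype.card_fin,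
    ← prod_pow, Fin.prod_univ_eq_prod_range (fun k => (k.factorial : ℝ) ^ 2)]

theorem vandermonde_squared_exp_integral (μ : ℕ) (hμ : 1 ≤ μ) :
    ∫ q in {q : Fin μ → ℝ | ∀ i, 0 < q i},
        (∏ i, ∏ j ∈ Finset.Ioi i, (q i - q j) ^ 2) * Real.exp (-∑ k, q k)
      = (μ.factorial : ℝ) * ∏ k ∈ Finset.range μ, ((k.factorial : ℝ)) ^ 2 :=
  vandermonde_squared_exp_integral_general μ
end

section
/- For all k, l ∈ ℕ, ∫_0^∞ e^{−q} · L_k(q) · L_l(q) dq = 1 if k = l and 0 otherwise. -/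
/-!
Expanding `L_k`, the integral becomes a combination of the moments `∫ e^{-x} x^i L_l(x) dx`,
which the Gamma integral `∫ e^{-x} x^n dx = n!` evaluates to `(-1)^l i! (i choose l)`; in
particular they vanish for `i < l`. This moment formula and the final collapse
`∑_i (-1)^i (k choose i) (i choose l) = (-1)^k δ_{kl}` are both coefficient extractions from
the binomial identity `∑_j (-1)^j (n choose j) (X + 1)^j = (-X)^n`.
-/

open scoped BigOperators

/-- The Laguerre polynomial `L_n`. -/
noncomputable def laguerre (n : ℕ) (x : ℝ) : ℝ :=
  ∑ k ∈ Finset.range (n + 1), (-1) ^ k * (n.choose k : ℝ) * x ^ k / (k.factorial : ℝ)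

open scoped Nat
open MeasureTheory Polynomial Finset

section Combinatorics

variable {R : Type*} [CommRing R]

theorem sum_range_neg_one_pow_mul_choose_mul_add_one_pow (n : ℕ) (x : R) :
    ∑ j ∈ range (n + 1), (-1) ^ j * (n.choose j : R) * (x + 1) ^ j = (-x) ^ n := by
  calc ∑ j ∈ range (n + 1), (-1) ^ j * (n.choose j : R) * (x + 1) ^ j
      = ∑ j ∈ range (n + 1), (-(x + 1)) ^ j * 1 ^ (n - j) * (n.choose j : R) :=
        sum_congr rfl fun j _ => by rw [one_pow, neg_pow (x + 1)]; ring
    _ = (-x) ^ n := by rw [← add_pow]; ring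

theorem sum_range_neg_one_pow_mul_choose_mul_choose (k l : ℕ) :
    ∑ i ∈ range (k + 1), (-1) ^ i * (k.choose i : R) * (i.choose l : R)
      = if k = l then (-1) ^ k else 0 := by
  have hpoly : ∑ i ∈ range (k + 1), C ((-1) ^ i * (k.choose i : R)) * (X + 1) ^ i
      = C ((-1) ^ k) * X ^ k := by
    simpa [neg_pow (X : R[X])] using
      sum_range_neg_one_pow_mul_choose_mul_add_one_pow k (X : R[X])
  have hcoeff := congrArg (coeff · l) hpoly
  simp only [finsetSum_coeff, coeff_C_mul, coeff_X_add_one_pow, coeff_X_pow] at hcoeff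
  rw [hcoeff, mul_ite, mul_one, mul_zero]
  exact if_congr eq_comm rfl rfl

theorem sum_range_neg_one_pow_mul_choose_mul_add_choose (i l : ℕ) :
    ∑ j ∈ range (l + 1), (-1) ^ j * (l.choose j : R) * ((i + j).choose i : R)
      = (-1) ^ l * (i.choose l : R) := by
  have hpoly : ∑ j ∈ range (l + 1), C ((-1) ^ j * (l.choose j : R)) * (X + 1) ^ (i + j)
      = C ((-1) ^ l) * ((X + 1) ^ i * X ^ l) := by
    calc _ = (X + 1) ^ i *
          ∑ j ∈ range (l + 1), (-1) ^ j * (l.choose j : R[X]) * (X + 1) ^ j := by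
          rw [mul_sum]
          refine sum_congr rfl fun j _ => ?_
          simp only [map_mul, map_pow, map_neg, map_one, map_natCast]
          ring
      _ = _ := by
          rw [sum_range_neg_one_pow_mul_choose_mul_add_one_pow, neg_pow (X : R[X])]
          simp only [map_pow, map_neg, map_one]
          ring
  have hcoeff := congrArg (coeff · i) hpoly
  simp only [finsetSum_coeff, coeff_C_mul, coeff_X_add_one_pow, coeff_mul_X_pow'] at hcoeff
  rw [hcoeff]
  split_ifs with hl
  · rw [Nat.choose_symm hl]
  · rw [Nat.choose_eq_zero_of_lt (not_le.mp hl), Nat.cast_zero, mul_zero]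

end Combinatorics

section LaguerreMoments

open Real Set

theorem integrableOn_exp_neg_mul_pow (n : ℕ) :
    IntegrableOn (fun x : ℝ => exp (-x) * x ^ n) (Ioi 0) := by
  simpa [← rpow_natCast] using GammaIntegral_convergent (s := n + 1) (by positivity)

theorem integral_exp_neg_mul_pow (n : ℕ) :
    ∫ x in Ioi (0 : ℝ), exp (-x) * x ^ n = n ! := by
  simpa [← rpow_natCast, Gamma_nat_eq_factorial] using
    (Gamma_eq_integral (s := n + 1) (by positivity)).symm

theorem exp_neg_mul_pow_mul_laguerre (i l : ℕ) (x : ℝ) :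
    exp (-x) * x ^ i * laguerre l x
      = ∑ j ∈ range (l + 1), (-1) ^ j * l.choose j / j ! * (exp (-x) * x ^ (i + j)) := by
  rw [laguerre, mul_sum]
  exact sum_congr rfl fun j _ => by ring

theorem integrableOn_exp_neg_mul_pow_mul_laguerre (i l : ℕ) :
    IntegrableOn (fun x : ℝ => exp (-x) * x ^ i * laguerre l x) (Ioi 0) := by
  simp_rw [exp_neg_mul_pow_mul_laguerre]
  exact integrable_finsetSum _ fun j _ => (integrableOn_exp_neg_mul_pow (i + j)).const_mul _

theorem integral_exp_neg_mul_pow_mul_laguerre (i l : ℕ) :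
    ∫ x in Ioi (0 : ℝ), exp (-x) * x ^ i * laguerre l x = (-1) ^ l * i ! * i.choose l := by
  simp_rw [exp_neg_mul_pow_mul_laguerre]
  rw [integral_finsetSum _ fun j _ => (integrableOn_exp_neg_mul_pow (i + j)).const_mul _]
  simp_rw [integral_const_mul, integral_exp_neg_mul_pow]
  calc ∑ j ∈ range (l + 1), (-1) ^ j * l.choose j / j ! * ((i + j) ! : ℝ)
      = i ! *
          ∑ j ∈ range (l + 1), (-1) ^ j * (l.choose j : ℝ) * ((i + j).choose i : ℝ) := by
        rw [mul_sum]
        refine sum_congr rfl fun j _ => ?_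
        have hfac : ((i + j) ! : ℝ) = (i + j).choose i * i ! * j ! := by
          rw [Nat.choose_symm_add]
          exact_mod_cast (Nat.add_choose_mul_factorial_mul_factorial i j).symm
        rw [hfac]
        field_simp
    _ = (-1) ^ l * i ! * i.choose l := by
        rw [sum_range_neg_one_pow_mul_choose_mul_add_choose]; ring

end LaguerreMoments

theorem laguerre_orthonormal (k l : ℕ) :
    ∫ q in Set.Ioi (0 : ℝ), Real.exp (-q) * laguerre k q * laguerre l q
      = if k = l then 1 else 0 := by
  have expand (q : ℝ) : Real.exp (-q) * laguerre k q * laguerre l q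
      = ∑ i ∈ range (k + 1),
          (-1) ^ i * k.choose i / i ! * (Real.exp (-q) * q ^ i * laguerre l q) := by
    rw [laguerre, mul_sum, sum_mul]
    exact sum_congr rfl fun i _ => by ring
  simp_rw [expand]
  rw [integral_finsetSum _ fun i _ =>
    (integrableOn_exp_neg_mul_pow_mul_laguerre i l).const_mul _]
  simp_rw [integral_const_mul, integral_exp_neg_mul_pow_mul_laguerre]
  calc ∑ i ∈ range (k + 1), (-1) ^ i * k.choose i / i ! * ((-1) ^ l * i ! * i.choose l : ℝ)
      = (-1) ^ l * ∑ i ∈ range (k + 1), (-1) ^ i * (k.choose i : ℝ) * (i.choose l : ℝ) := by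
        rw [mul_sum]
        refine sum_congr rfl fun i _ => ?_
        field_simp
    _ = if k = l then 1 else 0 := by
        rw [sum_range_neg_one_pow_mul_choose_mul_choose]
        split_ifs with h
        · rw [h, ← pow_add, ← two_mul, pow_mul, neg_one_sq, one_pow]
        · rw [mul_zero]
end

section
/- For every real x and every real z with |z| < 1, the series ∑_{l=0}^∞ L_l(x) · z^l converges (HasSum) to (1 − z)⁻¹ · Real.exp (x·z / (z − 1)). -/
open scoped BigOperators

/-!
Write `L_l(x) z^l = ∑_{k + m = l} (-x)^k / k! · C(m + k, k) z^(m + k)`. For `|z| < 1` this double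
series converges absolutely: its absolute values form the same series at `(-|x|, |z|)`. Summing
over `m` first gives `(-x)^k / k! · z^k / (1 - z)^(k+1)` by the negative binomial series, and
then summing over `k` gives `(1 - z)⁻¹ exp(x z / (z - 1))`; summing along the antidiagonals
`k + m = l` instead gives the generating function.
-/

open Finset
open scoped Nat

theorem HasSum.sum_antidiagonal {M A : Type*} [AddCommMonoid M] [TopologicalSpace M]
    [ContinuousAdd M] [RegularSpace M] [AddMonoid A] [HasAntidiagonal A] {f : A × A → M} {a : M}
    (hf : HasSum f a) : HasSum (fun n ↦ ∑ p ∈ antidiagonal n, f p) a :=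
  (HasAntidiagonal.sigmaAntidiagonalEquivProd.hasSum_iff.mpr hf).sigma fun n ↦
    (antidiagonal n).hasSum f

theorem hasSum_choose_mul_pow_add {𝕜 : Type*} [NormedField 𝕜] [CompleteSpace 𝕜] {z : 𝕜}
    (hz : ‖z‖ < 1) (k : ℕ) :
    HasSum (fun m ↦ (m + k).choose k * z ^ (m + k)) (z ^ k / (1 - z) ^ (k + 1)) := by
  rw [div_eq_mul_inv, mul_comm, ← one_div]
  exact ((hasSum_choose_mul_geometric_of_norm_lt_one k hz).mul_right (z ^ k)).congr_fun
    fun m ↦ by rw [pow_add, mul_assoc]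

noncomputable def laguerreDoubleSeries (x z : ℝ) (p : ℕ × ℕ) : ℝ :=
  (-x) ^ p.1 / p.1 ! * ((p.2 + p.1).choose p.1 * z ^ (p.2 + p.1))

theorem hasSum_laguerreDoubleSeries_fiber {x z : ℝ} (hz : |z| < 1) (k : ℕ) :
    HasSum (fun m ↦ laguerreDoubleSeries x z (k, m))
      ((1 - z)⁻¹ * ((x * z / (z - 1)) ^ k / k !)) := by
  have hval : (-x) ^ k / k ! * (z ^ k / (1 - z) ^ (k + 1)) =
      (1 - z)⁻¹ * ((x * z / (z - 1)) ^ k / k !) := by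
    have hquot : x * z / (z - 1) = -x * z * (1 - z)⁻¹ := by
      rw [← neg_sub, div_neg, div_eq_mul_inv, neg_mul, neg_mul]
    simp only [hquot, mul_pow, inv_pow, pow_succ, div_eq_mul_inv, mul_inv]
    ring
  exact hval ▸ (hasSum_choose_mul_pow_add (by rwa [Real.norm_eq_abs]) k).mul_left ((-x) ^ k / k !)

theorem abs_laguerreDoubleSeries (x z : ℝ) (p : ℕ × ℕ) :
    |laguerreDoubleSeries x z p| = laguerreDoubleSeries (-|x|) |z| p := by
  simp [laguerreDoubleSeries, abs_mul, abs_div, abs_pow]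

theorem summable_laguerreDoubleSeries (x : ℝ) {z : ℝ} (hz : |z| < 1) :
    Summable (laguerreDoubleSeries x z) := by
  refine Summable.of_abs ?_
  simp only [abs_laguerreDoubleSeries]
  have hz' : |(|z|)| < 1 := by rwa [abs_abs]
  rw [summable_prod_of_nonneg fun p ↦ abs_laguerreDoubleSeries x z p ▸ abs_nonneg _]
  refine ⟨fun k ↦ (hasSum_laguerreDoubleSeries_fiber hz' k).summable, ?_⟩
  simp only [fun k ↦ (hasSum_laguerreDoubleSeries_fiber (x := -|x|) hz' k).tsum_eq]
  exact (NormedSpace.expSeries_div_hasSum_exp (-|x| * |z| / (|z| - 1))).summable.mul_left _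

theorem sum_antidiagonal_laguerreDoubleSeries (x z : ℝ) (l : ℕ) :
    ∑ p ∈ antidiagonal l, laguerreDoubleSeries x z p = laguerre l x * z ^ l := by
  rw [Nat.sum_antidiagonal_eq_sum_range_succ_mk, laguerre, sum_mul]
  refine sum_congr rfl fun k hk ↦ ?_
  rw [laguerreDoubleSeries, Nat.sub_add_cancel (mem_range_succ_iff.mp hk), neg_pow]
  ring

theorem laguerre_generating_function (x z : ℝ) (hz : |z| < 1) :
    HasSum (fun l : ℕ => laguerre l x * z ^ l)
      ((1 - z)⁻¹ * Real.exp (x * z / (z - 1))) := by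
  have hrows : HasSum (fun k ↦ (1 - z)⁻¹ * ((x * z / (z - 1)) ^ k / k !))
      ((1 - z)⁻¹ * Real.exp (x * z / (z - 1))) := by
    rw [Real.exp_eq_exp_ℝ]
    exact (NormedSpace.expSeries_div_hasSum_exp (x * z / (z - 1))).mul_left (1 - z)⁻¹
  have hdouble := (summable_laguerreDoubleSeries x hz).hasSum
  rw [(hdouble.prod_fiberwise (hasSum_laguerreDoubleSeries_fiber hz)).unique hrows] at hdouble
  simpa only [sum_antidiagonal_laguerreDoubleSeries] using hdouble.sum_antidiagonal
end

section
/- For all k, l ∈ ℕ and every real β > −1, I_{k l}^{(β)} = ((−1)^l / l!) · ∑_{t=0}^{k} (−1)^t · (k choose t) · (Real.Gamma (t + β + 1))² / (t! · Real.Gamma (t + β + 1 − l)). (When t + β + 1 − l is a nonpositive integer, Real.Gamma vanishes there, and the corresponding term of the sum—interpreted via Lean's division-by-zero convention—is 0, matching the vanishing falling factorial (t+β)(t+β−1)⋯(t+β−l+1).) -/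
open scoped BigOperators

/-- `I_{kl}^{(β)} = ∫₀^∞ e^{-q} q^β L_k(q) L_l(q) dq`. -/
noncomputable def Ikl (k l : ℕ) (β : ℝ) : ℝ :=
  ∫ q in Set.Ioi (0 : ℝ), Real.exp (-q) * q ^ β * laguerre k q * laguerre l q

/-!
Expanding both Laguerre polynomials and integrating term by term against `e^{-q} q^β` gives
`I_{kl} = ∑_{t,s} c_{k,t} c_{l,s} Γ(a_t + s)` with `a_t = t + β + 1`. Writing
`Γ(a + s) = Γ(a) (a)_s`, the inner sum over `s` is `Γ(a) ₂F₁(-l, a; 1; 1)`, which the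
Chu–Vandermonde identity evaluates to `Γ(a) (1 - a)_l / l! = (-1)^l Γ(a)² / (l! Γ(a - l))`.
-/

open Polynomial Finset MeasureTheory Set Real

theorem Polynomial.descPochhammer_smeval_eq_eval {R : Type*} [CommRing R] (r : R) (n : ℕ) :
    (descPochhammer ℤ n).smeval r = (descPochhammer R n).eval r := by
  rw [← aeval_eq_smeval, aeval_def, eval₂_eq_eval_map, descPochhammer_map]

theorem Ring.choose_eq_descPochhammer_eval_div {K : Type*} [Field K] [CharZero K] (a : K)
    (n : ℕ) :
    Ring.choose a n = (descPochhammer K n).eval a / n.factorial := by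
  rw [Ring.choose_eq_smul, descPochhammer_smeval_eq_eval, smul_eq_mul, inv_mul_eq_div]

theorem Ring.sum_range_choose_mul_choose {R : Type*} [Ring R] [BinomialRing R] (b : R) (l : ℕ) :
    ∑ s ∈ range (l + 1), (l.choose s : R) * Ring.choose b s = Ring.choose (l + b) l := by
  rw [Ring.add_choose_eq l (Nat.cast_commute l b), ← Nat.sum_antidiagonal_swap,
    Nat.sum_antidiagonal_eq_sum_range_succ_mk]
  refine sum_congr rfl fun s hs => ?_
  rw [Prod.swap_prod_mk, Ring.choose_natCast,
    Nat.choose_symm (by simpa [Nat.lt_succ_iff] using hs)]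

theorem sum_range_choose_mul_ascPochhammer_div_factorial {K : Type*} [Field K] [CharZero K]
    (a : K) (l : ℕ) :
    ∑ s ∈ range (l + 1), (-1) ^ s * (l.choose s : K) * (ascPochhammer K s).eval a / s.factorial
      = (-1) ^ l * (descPochhammer K l).eval (a - 1) / l.factorial := by
  have hterm (s : ℕ) :
      (-1) ^ s * (ascPochhammer K s).eval a = (descPochhammer K s).eval (-a) := by
    rw [← neg_neg a, ascPochhammer_eval_neg_eq_descPochhammer, neg_neg, ← mul_assoc,
      ← mul_pow]
    simp
  have htop :
      (descPochhammer K l).eval (l + -a) = (-1) ^ l * (descPochhammer K l).eval (a - 1) := by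
    rw [descPochhammer_eval_eq_ascPochhammer, ← ascPochhammer_eval_neg_eq_descPochhammer]
    ring_nf
  calc _ = ∑ s ∈ range (l + 1), (l.choose s : K) * Ring.choose (-a) s := by
        refine sum_congr rfl fun s _ => ?_
        rw [Ring.choose_eq_descPochhammer_eval_div, ← hterm]
        ring
    _ = _ := by
        rw [Ring.sum_range_choose_mul_choose, Ring.choose_eq_descPochhammer_eval_div, htop]

namespace Real

theorem Gamma_add_nat_eq_mul_ascPochhammer {a : ℝ} (ha : ∀ m : ℕ, a ≠ -m) (n : ℕ) :
    Gamma (a + n) = Gamma a * (ascPochhammer ℝ n).eval a := by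
  induction n with
  | zero => simp
  | succ n ih =>
    have hne : a + n ≠ 0 := fun h => ha n (eq_neg_of_add_eq_zero_left h)
    rw [Nat.cast_succ, ← add_assoc, Gamma_add_one hne, ih, ascPochhammer_succ_eval]
    ring

/-- At a pole `a - n ∈ -ℕ` the left side is `0` by `x / 0 = 0`; then `a ∈ {1, …, n}`, so the
right side `(a - 1) ⋯ (a - n)` vanishes as well. -/
theorem Gamma_div_Gamma_sub_nat {a : ℝ} (ha : ∀ m : ℕ, a ≠ -m) (n : ℕ) :
    Gamma a / Gamma (a - n) = (descPochhammer ℝ n).eval (a - 1) := by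
  by_cases h : Gamma (a - n) = 0
  · obtain ⟨m, hm⟩ := (Gamma_eq_zero_iff _).mp h
    have hmn : m < n := by
      by_contra! hnm
      exact ha (m - n) (by push_cast [hnm]; linarith)
    have hpos : a - 1 = ((n - m - 1 : ℕ) : ℝ) := by
      rw [Nat.cast_sub (by omega), Nat.cast_sub hmn.le, Nat.cast_one]; linarith
    rw [h, div_zero, hpos, descPochhammer_eval_coe_nat_of_lt (by omega)]
  · have hsub : ∀ m : ℕ, a - n ≠ -m := fun m hm => h ((Gamma_eq_zero_iff _).mpr ⟨m, hm⟩)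
    have := Gamma_add_nat_eq_mul_ascPochhammer hsub n
    rw [sub_add_cancel] at this
    rw [this, mul_div_cancel_left₀ _ h, descPochhammer_eval_eq_ascPochhammer]
    ring_nf

end Real

section GammaMoments
variable {β : ℝ}

/-- The right-hand side is the integrand of `Γ(β + n + 1)` in `Real.Gamma_eq_integral`. -/
theorem exp_neg_mul_rpow_mul_pow_eq {q : ℝ} (hq : 0 < q) (n : ℕ) :
    exp (-q) * q ^ β * q ^ n = exp (-q) * q ^ (β + n + 1 - 1) := by
  rw [add_sub_cancel_right, rpow_add hq, rpow_natCast, mul_assoc]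

theorem integrableOn_exp_neg_mul_rpow_mul_pow (hβ : -1 < β) (n : ℕ) :
    IntegrableOn (fun q : ℝ => exp (-q) * q ^ β * q ^ n) (Ioi 0) := by
  have hpos : 0 < β + n + 1 := by linarith [(n.cast_nonneg : (0 : ℝ) ≤ n)]
  exact (GammaIntegral_convergent hpos).congr_fun
    (fun _ hq => (exp_neg_mul_rpow_mul_pow_eq hq n).symm) measurableSet_Ioi

theorem integral_exp_neg_mul_rpow_mul_pow (hβ : -1 < β) (n : ℕ) :
    ∫ q in Ioi 0, exp (-q) * q ^ β * q ^ n = Gamma (β + n + 1) := by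
  rw [Gamma_eq_integral (by linarith [(n.cast_nonneg : (0 : ℝ) ≤ n)])]
  exact setIntegral_congr_fun measurableSet_Ioi fun _ hq => exp_neg_mul_rpow_mul_pow_eq hq n

theorem integral_exp_neg_mul_rpow_mul_sum (hβ : -1 < β) {ι : Type*} (s : Finset ι)
    (c : ι → ℝ) (n : ι → ℕ) :
    ∫ q in Ioi 0, exp (-q) * q ^ β * ∑ i ∈ s, c i * q ^ n i
      = ∑ i ∈ s, c i * Gamma (β + n i + 1) := by
  have hint (i : ι) : IntegrableOn (fun q : ℝ => c i * (exp (-q) * q ^ β * q ^ n i)) (Ioi 0) :=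
    (integrableOn_exp_neg_mul_rpow_mul_pow hβ (n i)).const_mul (c i)
  simp_rw [mul_sum, mul_left_comm _ (c _)]
  rw [integral_finsetSum _ fun i _ => hint i]
  simp_rw [integral_const_mul, integral_exp_neg_mul_rpow_mul_pow hβ]

end GammaMoments

theorem laguerre_mul_laguerre (k l : ℕ) (q : ℝ) :
    laguerre k q * laguerre l q = ∑ ts ∈ range (k + 1) ×ˢ range (l + 1),
      ((-1) ^ ts.1 * (k.choose ts.1 : ℝ) / ts.1.factorial) *
        ((-1) ^ ts.2 * (l.choose ts.2 : ℝ) / ts.2.factorial) * q ^ (ts.1 + ts.2) := by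
  rw [laguerre, laguerre, sum_mul_sum, sum_product]
  refine sum_congr rfl fun t _ => sum_congr rfl fun s _ => ?_
  ring

theorem Ikl_eq_sum_Gamma (k l : ℕ) {β : ℝ} (hβ : -1 < β) :
    Ikl k l β = ∑ t ∈ range (k + 1), ∑ s ∈ range (l + 1),
      ((-1) ^ t * (k.choose t : ℝ) / t.factorial) *
        ((-1) ^ s * (l.choose s : ℝ) / s.factorial) * Gamma (β + (t + s : ℕ) + 1) := by
  simp_rw [Ikl, mul_assoc _ (laguerre k _), laguerre_mul_laguerre]
  rw [integral_exp_neg_mul_rpow_mul_sum hβ, sum_product]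

theorem sum_range_choose_mul_Gamma_add_div_factorial {a : ℝ} (ha : ∀ m : ℕ, a ≠ -m)
    (l : ℕ) :
    ∑ s ∈ range (l + 1), (-1) ^ s * (l.choose s : ℝ) * Gamma (a + s) / s.factorial
      = (-1) ^ l / l.factorial * (Gamma a ^ 2 / Gamma (a - l)) := by
  calc _ = Gamma a * ∑ s ∈ range (l + 1),
        (-1) ^ s * (l.choose s : ℝ) * (ascPochhammer ℝ s).eval a / s.factorial := by
        rw [mul_sum]
        refine sum_congr rfl fun s _ => ?_
        rw [Gamma_add_nat_eq_mul_ascPochhammer ha]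
        ring
    _ = Gamma a * ((-1) ^ l * (descPochhammer ℝ l).eval (a - 1) / l.factorial) := by
        rw [sum_range_choose_mul_ascPochhammer_div_factorial]
    _ = _ := by
        rw [← Gamma_div_Gamma_sub_nat ha]
        ring

theorem Ikl_eq_hypergeometric_sum (k l : ℕ) (β : ℝ) (hβ : -1 < β) :
    Ikl k l β
      = ((-1) ^ l / (l.factorial : ℝ)) *
        ∑ t ∈ Finset.range (k + 1),
          (-1) ^ t * (k.choose t : ℝ) * (Real.Gamma (t + β + 1)) ^ 2 /
            ((t.factorial : ℝ) * Real.Gamma (t + β + 1 - l)) := by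
  rw [Ikl_eq_sum_Gamma k l hβ, mul_sum]
  refine sum_congr rfl fun t _ => ?_
  have ha : ∀ m : ℕ, (t + β + 1 : ℝ) ≠ -m := fun m h => by
    linarith [(t.cast_nonneg : (0 : ℝ) ≤ t), (m.cast_nonneg : (0 : ℝ) ≤ m)]
  calc _ = (-1) ^ t * (k.choose t : ℝ) / t.factorial * ∑ s ∈ range (l + 1),
        (-1) ^ s * (l.choose s : ℝ) * Gamma ((t + β + 1) + s) / s.factorial := by
        rw [mul_sum]
        refine sum_congr rfl fun s _ => ?_
        push_cast
        ring_nf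
    _ = _ := by
        rw [sum_range_choose_mul_Gamma_add_div_factorial ha]
        ring
end

section
/- ∫_0^1 Real.sqrt (x * (1 − x)) · (1 − 2 x)² dx = π / 32. Consequently, the mean negativity of a Haar-random pure state of a 2 × 2 bipartite system, ⟨N⟩ = (1/2) · 3 · ∫_0^1 2 · Real.sqrt (x (1 − x)) · (1 − 2 x)² dx, equals 3π/32, so that ⟨N⟩ / N_max = 3π/16 with N_max = 1/2. -/
open Real intervalIntegral

/-! Substituting `u = 2x - 1` turns the integral into `¼ ∫₋₁¹ √(1 - u²) u² du`, and `u = sin θ`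
turns that into `¼ ∫ sin² θ cos² θ dθ` over `[-π/2, π/2]`, that is `¼ · π/8`. -/

theorem integral_sqrt_one_sub_sq_mul_sq :
    ∫ u in (-1 : ℝ)..1, √(1 - u ^ 2) * u ^ 2 = π / 8 := by
  have hπ : -(π / 2) ≤ π / 2 := neg_le_self (half_pos pi_pos).le
  calc ∫ u in (-1 : ℝ)..1, √(1 - u ^ 2) * u ^ 2
      = ∫ u in sin (-(π / 2))..sin (π / 2), √(1 - u ^ 2) * u ^ 2 := by
        rw [sin_neg, sin_pi_div_two]
    _ = ∫ θ in (-(π / 2))..(π / 2), √(1 - sin θ ^ 2) * sin θ ^ 2 * cos θ :=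
        (integral_comp_mul_deriv (fun θ _ => hasDerivAt_sin θ) continuousOn_cos
          (by fun_prop)).symm
    _ = ∫ θ in (-(π / 2))..(π / 2), sin θ ^ 2 * cos θ ^ 2 := by
        refine integral_congr fun θ hθ => ?_
        rw [Set.uIcc_of_le hπ] at hθ
        simp only [← cos_eq_sqrt_one_sub_sin_sq hθ.1 hθ.2]
        ring
    _ = π / 8 := by
        rw [integral_sin_sq_mul_cos_sq, show 4 * (π / 2) = 2 * π by ring,
          show 4 * -(π / 2) = -(2 * π) by ring, sin_neg, sin_two_pi]
        ring

theorem sqrt_mul_one_sub_mul_sq_eq (x : ℝ) :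
    √(x * (1 - x)) * (1 - 2 * x) ^ 2 = √(1 - (2 * x - 1) ^ 2) * (2 * x - 1) ^ 2 / 2 := by
  have hsqrt : √(1 - (2 * x - 1) ^ 2) = 2 * √(x * (1 - x)) := by
    rw [show 1 - (2 * x - 1) ^ 2 = 2 ^ 2 * (x * (1 - x)) by ring,
      sqrt_mul (by norm_num), sqrt_sq (by norm_num)]
  rw [hsqrt]
  ring

theorem integral_sqrt_mul_one_sub_mul_sq :
    ∫ x in (0 : ℝ)..1, √(x * (1 - x)) * (1 - 2 * x) ^ 2 = π / 32 := by
  simp only [sqrt_mul_one_sub_mul_sq_eq, integral_div,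
    integral_comp_mul_sub (fun u => √(1 - u ^ 2) * u ^ 2) (two_ne_zero' ℝ)]
  norm_num [integral_sqrt_one_sub_sq_mul_sq]
  ring

theorem mean_negativity_two_qubits :
    (∫ x in (0:ℝ)..1, Real.sqrt (x * (1 - x)) * (1 - 2 * x) ^ 2) = Real.pi / 32 ∧
    (1 / 2 : ℝ) * 3 * (∫ x in (0:ℝ)..1, 2 * Real.sqrt (x * (1 - x)) * (1 - 2 * x) ^ 2)
      = 3 * Real.pi / 32 ∧
    (3 * Real.pi / 32) / (1 / 2 : ℝ) = 3 * Real.pi / 16 := by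
  refine ⟨integral_sqrt_mul_one_sub_mul_sq, ?_, by ring⟩
  simp only [mul_assoc (2 : ℝ), integral_const_mul, integral_sqrt_mul_one_sub_mul_sq]
  ring
end
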